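/- Let (C, ⊗, e, a, l, r, T, λ, ρ) be a suspended monoidal category, and for integers p define λ_p and ρ_p as the iterated natural isomorphisms built from λ and ρ. For f : e → T^p e and g : e → T^q e, define f ⋆ g : e → T^{p+q} e as the composite T^{p+q}(l) ∘ T^p(λ_q) ∘ ρ_p ∘ (f ⊗ g) ∘ r^{-1}, and define f · g = T^q(f) ∘ g : e → T^{p+q} e. Then f ⋆ g = g · f, i.e. T^{p+q}(l) ∘ T^p(λ_q) ∘ ρ_p ∘ (f ⊗ g) ∘ r_e^{-1} = T^p(g) ∘ f. -/

import Mathlib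

open CategoryTheory Category MonoidalCategory

universe v u

variable (C : Type u) [Category.{v} C] [Preadditive C] [MonoidalCategory C]
  [MonoidalPreadditive C] [HasShift C ℤ] [∀ n : ℤ, (shiftFunctor C n).Additive]

/-- A *suspended monoidal category* (Suárez-Álvarez): an additive monoidal category equipped
with an additive automorphism `T` (encoded as a shift by `ℤ`), together with natural
isomorphisms `lam : x ⊗ T y ≅ T (x ⊗ y)` and `rho : T x ⊗ y ≅ T (x ⊗ y)` compatible with the
unitors, and such that the square formed by `lam` and `rho` anticommutes. -/
structure SuspendedMonoidal where
  lam : ∀ x y : C, x ⊗ y⟦(1 : ℤ)⟧ ≅ (x ⊗ y)⟦(1 : ℤ)⟧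
  rho : ∀ x y : C, x⟦(1 : ℤ)⟧ ⊗ y ≅ (x ⊗ y)⟦(1 : ℤ)⟧
  lam_naturality : ∀ {x x' y y' : C} (f : x ⟶ x') (g : y ⟶ y'),
    (f ⊗ₘ g⟦(1 : ℤ)⟧') ≫ (lam x' y').hom = (lam x y).hom ≫ (f ⊗ₘ g)⟦(1 : ℤ)⟧'
  rho_naturality : ∀ {x x' y y' : C} (f : x ⟶ x') (g : y ⟶ y'),
    (f⟦(1 : ℤ)⟧' ⊗ₘ g) ≫ (rho x' y').hom = (rho x y).hom ≫ (f ⊗ₘ g)⟦(1 : ℤ)⟧'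
  lam_unit : ∀ x : C, (lam (𝟙_ C) x).hom ≫ (λ_ x).hom⟦(1 : ℤ)⟧' = (λ_ (x⟦(1 : ℤ)⟧)).hom
  rho_unit : ∀ x : C, (rho x (𝟙_ C)).hom ≫ (ρ_ x).hom⟦(1 : ℤ)⟧' = (ρ_ (x⟦(1 : ℤ)⟧)).hom
  anticomm : ∀ x y : C,
    (rho x (y⟦(1 : ℤ)⟧)).hom ≫ (lam x y).hom⟦(1 : ℤ)⟧' =
      -((lam (x⟦(1 : ℤ)⟧) y).hom ≫ (rho x y).hom⟦(1 : ℤ)⟧')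

variable {C}

namespace SuspendedMonoidal

/-- `λ_n` for `n ∈ ℕ`, defined by iteration: `λ_0 = id` (up to the canonical identification
`T^0 = 𝟭`) and `λ_{n+1} = T λ_n ∘ λ`. -/
noncomputable def lamPowNat (S : SuspendedMonoidal C) : ∀ (n : ℕ) (x y : C),
    x ⊗ y⟦(n : ℤ)⟧ ≅ (x ⊗ y)⟦(n : ℤ)⟧
  | 0, x, y => whiskerLeftIso x ((shiftFunctorZero' C ((0 : ℕ) : ℤ) (by simp)).app y) ≪≫
      ((shiftFunctorZero' C ((0 : ℕ) : ℤ) (by simp)).app (x ⊗ y)).symm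
  | (n + 1), x, y =>
      whiskerLeftIso x
        ((shiftFunctorAdd' C (n : ℤ) 1 (((n + 1 : ℕ) : ℤ)) (by push_cast; ring)).app y) ≪≫
      S.lam x (y⟦(n : ℤ)⟧) ≪≫
      (shiftFunctor C (1 : ℤ)).mapIso (S.lamPowNat n x y) ≪≫
      ((shiftFunctorAdd' C (n : ℤ) 1 (((n + 1 : ℕ) : ℤ)) (by push_cast; ring)).app (x ⊗ y)).symm

/-- `ρ_n` for `n ∈ ℕ`, defined by iteration: `ρ_0 = id` and `ρ_{n+1} = T ρ_n ∘ ρ`. -/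
noncomputable def rhoPowNat (S : SuspendedMonoidal C) : ∀ (n : ℕ) (x y : C),
    x⟦(n : ℤ)⟧ ⊗ y ≅ (x ⊗ y)⟦(n : ℤ)⟧
  | 0, x, y => whiskerRightIso ((shiftFunctorZero' C ((0 : ℕ) : ℤ) (by simp)).app x) y ≪≫
      ((shiftFunctorZero' C ((0 : ℕ) : ℤ) (by simp)).app (x ⊗ y)).symm
  | (n + 1), x, y =>
      whiskerRightIso
        ((shiftFunctorAdd' C (n : ℤ) 1 (((n + 1 : ℕ) : ℤ)) (by push_cast; ring)).app x) y ≪≫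
      S.rho (x⟦(n : ℤ)⟧) y ≪≫
      (shiftFunctor C (1 : ℤ)).mapIso (S.rhoPowNat n x y) ≪≫
      ((shiftFunctorAdd' C (n : ℤ) 1 (((n + 1 : ℕ) : ℤ)) (by push_cast; ring)).app (x ⊗ y)).symm

/-- `λ_p` for `p ∈ ℤ` : for `p ≥ 0` it is the iterate `λ_p = T^{p-1}λ ∘ ⋯ ∘ Tλ ∘ λ`, and for
`p < 0` it is `λ_p = T^{p}(λ_{-p}^{-1})` (up to the canonical identification `T^{-p} T^{p} = 𝟭`). -/
noncomputable def lamPow (S : SuspendedMonoidal C) : ∀ (p : ℤ) (x y : C),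
    x ⊗ y⟦p⟧ ≅ (x ⊗ y)⟦p⟧
  | Int.ofNat n, x, y => S.lamPowNat n x y
  | Int.negSucc n, x, y =>
      ((shiftFunctorCompIsoId C (((n + 1 : ℕ) : ℤ)) (Int.negSucc n)
          (by rw [Int.negSucc_eq]; push_cast; ring)).app (x ⊗ y⟦Int.negSucc n⟧)).symm ≪≫
      (shiftFunctor C (Int.negSucc n)).mapIso
        ((S.lamPowNat (n + 1) x (y⟦Int.negSucc n⟧)).symm ≪≫
          whiskerLeftIso x
            ((shiftFunctorCompIsoId C (Int.negSucc n) (((n + 1 : ℕ) : ℤ)) (by rw [Int.negSucc_eq]; push_cast; ring)).app y))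

/-- `ρ_p` for `p ∈ ℤ`. -/
noncomputable def rhoPow (S : SuspendedMonoidal C) : ∀ (p : ℤ) (x y : C),
    x⟦p⟧ ⊗ y ≅ (x ⊗ y)⟦p⟧
  | Int.ofNat n, x, y => S.rhoPowNat n x y
  | Int.negSucc n, x, y =>
      ((shiftFunctorCompIsoId C (((n + 1 : ℕ) : ℤ)) (Int.negSucc n)
          (by rw [Int.negSucc_eq]; push_cast; ring)).app (x⟦Int.negSucc n⟧ ⊗ y)).symm ≪≫
      (shiftFunctor C (Int.negSucc n)).mapIso
        ((S.rhoPowNat (n + 1) (x⟦Int.negSucc n⟧) y).symm ≪≫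
          whiskerRightIso
            ((shiftFunctorCompIsoId C (Int.negSucc n) (((n + 1 : ℕ) : ℤ)) (by rw [Int.negSucc_eq]; push_cast; ring)).app x) y)

end SuspendedMonoidal

/-!
Write `f ⊗ g = (f ▷ e) ≫ (T^p e ◁ g)`. Naturality of `ρ_p` in its second variable moves `g` past
`ρ_p`, where it becomes `T^p(e ◁ g)`; the unit compatibility of `λ_q` turns
`T^p(e ◁ g ≫ λ_q ≫ T^q l)` into `T^p(l ≫ g)`, and that of `ρ_p`, together with `l_e = r_e`,
collapses `r⁻¹ ≫ (f ▷ e) ≫ ρ_p ≫ T^p l` to `f`. These properties pass from `λ, ρ` to `λ_p, ρ_p`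
by induction for `p ≥ 0`, and for `p < 0` by conjugating with `T^{-p} ⋙ T^p ≅ 𝟭`.
-/

lemma shiftFunctorCompIsoId_naturality_1' {D A : Type*} [Category D] [AddGroup A] [HasShift D A]
    {m k : A} (h : m + k = 0) {X Y : D} (u : X ⟶ Y⟦k⟧) :
    (shiftFunctorCompIsoId D m k h).inv.app X ≫
        (u⟦m⟧' ≫ (shiftFunctorCompIsoId D k m (add_eq_zero_comm.mp h)).hom.app Y)⟦k⟧' = u := by
  rw [Functor.map_comp, shift_shiftFunctorCompIsoId_hom_app, shiftFunctorCompIsoId_naturality_1]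

namespace SuspendedMonoidal

variable {C : Type*} [Category C] [Preadditive C] [MonoidalCategory C] [HasShift C ℤ]
  (S : SuspendedMonoidal C)

lemma lamPowNat_leftUnitor (n : ℕ) (y : C) :
    (S.lamPowNat n (𝟙_ C) y).hom ≫ (λ_ y).hom⟦(n : ℤ)⟧' = (λ_ (y⟦(n : ℤ)⟧)).hom := by
  induction n with
  | zero =>
    simp only [lamPowNat, Iso.trans_hom, whiskerLeftIso_hom, Iso.symm_hom, Iso.app_hom,
      Iso.app_inv, assoc, ← NatTrans.naturality, Functor.id_map]
    simp
  | succ n ih =>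
    simp only [lamPowNat, Iso.trans_hom, whiskerLeftIso_hom, Iso.symm_hom, Iso.app_hom,
      Iso.app_inv, Functor.mapIso_hom, assoc]
    slice_lhs 4 5 => rw [← NatTrans.naturality, Functor.comp_map]
    slice_lhs 3 4 => rw [← Functor.map_comp, ih]
    slice_lhs 2 3 => rw [S.lam_unit]
    simp

lemma lamPow_leftUnitor (q : ℤ) (y : C) :
    (S.lamPow q (𝟙_ C) y).hom ≫ (λ_ y).hom⟦q⟧' = (λ_ (y⟦q⟧)).hom := by
  obtain n | n := q
  · exact S.lamPowNat_leftUnitor n y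
  · simp only [lamPow, Iso.trans_hom, Iso.symm_hom, Iso.app_inv, Functor.mapIso_hom,
      whiskerLeftIso_hom, Iso.app_hom, assoc, ← Functor.map_comp, leftUnitor_naturality]
    rw [reassoc_of% ((Iso.inv_comp_eq _).mpr (S.lamPowNat_leftUnitor _ _).symm)]
    exact shiftFunctorCompIsoId_naturality_1' _ _

lemma rhoPowNat_rightUnitor (n : ℕ) (x : C) :
    (S.rhoPowNat n x (𝟙_ C)).hom ≫ (ρ_ x).hom⟦(n : ℤ)⟧' = (ρ_ (x⟦(n : ℤ)⟧)).hom := by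
  induction n with
  | zero =>
    simp only [rhoPowNat, Iso.trans_hom, whiskerRightIso_hom, Iso.symm_hom, Iso.app_hom,
      Iso.app_inv, assoc, ← NatTrans.naturality, Functor.id_map]
    simp
  | succ n ih =>
    simp only [rhoPowNat, Iso.trans_hom, whiskerRightIso_hom, Iso.symm_hom, Iso.app_hom,
      Iso.app_inv, Functor.mapIso_hom, assoc]
    slice_lhs 4 5 => rw [← NatTrans.naturality, Functor.comp_map]
    slice_lhs 3 4 => rw [← Functor.map_comp, ih]
    slice_lhs 2 3 => rw [S.rho_unit]
    simp

lemma rhoPow_rightUnitor (p : ℤ) (x : C) :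
    (S.rhoPow p x (𝟙_ C)).hom ≫ (ρ_ x).hom⟦p⟧' = (ρ_ (x⟦p⟧)).hom := by
  obtain n | n := p
  · exact S.rhoPowNat_rightUnitor n x
  · simp only [rhoPow, Iso.trans_hom, Iso.symm_hom, Iso.app_inv, Functor.mapIso_hom,
      whiskerRightIso_hom, Iso.app_hom, assoc, ← Functor.map_comp, rightUnitor_naturality,
      Functor.comp_obj]
    rw [reassoc_of% ((Iso.inv_comp_eq _).mpr (S.rhoPowNat_rightUnitor _ _).symm)]
    exact shiftFunctorCompIsoId_naturality_1' _ _

lemma rho_whiskerLeft (x : C) {y y' : C} (v : y ⟶ y') :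
    x⟦(1 : ℤ)⟧ ◁ v ≫ (S.rho x y').hom = (S.rho x y).hom ≫ (x ◁ v)⟦(1 : ℤ)⟧' := by
  simpa using S.rho_naturality (𝟙 x) v

lemma rhoPowNat_whiskerLeft (n : ℕ) (x : C) {y y' : C} (v : y ⟶ y') :
    x⟦(n : ℤ)⟧ ◁ v ≫ (S.rhoPowNat n x y').hom = (S.rhoPowNat n x y).hom ≫ (x ◁ v)⟦(n : ℤ)⟧' := by
  induction n with
  | zero =>
    simp only [rhoPowNat, Iso.trans_hom, whiskerRightIso_hom, Iso.symm_hom, Iso.app_hom,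
      Iso.app_inv, assoc, ← NatTrans.naturality, Functor.id_map, Functor.id_obj,
      whisker_exchange_assoc]
  | succ n ih =>
    simp only [rhoPowNat, Iso.trans_hom, whiskerRightIso_hom, Iso.symm_hom, Iso.app_hom,
      Iso.app_inv, Functor.mapIso_hom, assoc, ← NatTrans.naturality, Functor.comp_map,
      Functor.comp_obj]
    slice_lhs 1 2 => rw [whisker_exchange]
    slice_lhs 2 3 => rw [S.rho_whiskerLeft]
    slice_lhs 3 4 => rw [← Functor.map_comp, ih, Functor.map_comp]
    simp only [assoc]

lemma rhoPow_whiskerLeft (p : ℤ) (x : C) {y y' : C} (v : y ⟶ y') :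
    x⟦p⟧ ◁ v ≫ (S.rhoPow p x y').hom = (S.rhoPow p x y).hom ≫ (x ◁ v)⟦p⟧' := by
  obtain n | n := p
  · exact S.rhoPowNat_whiskerLeft n x v
  · have hinv : (x⟦Int.negSucc n⟧ ◁ v)⟦((n + 1 : ℕ) : ℤ)⟧' ≫
        (S.rhoPowNat (n + 1) (x⟦Int.negSucc n⟧) y').inv =
        (S.rhoPowNat (n + 1) (x⟦Int.negSucc n⟧) y).inv ≫
          x⟦Int.negSucc n⟧⟦((n + 1 : ℕ) : ℤ)⟧ ◁ v := by
      rw [Iso.comp_inv_eq, assoc, S.rhoPowNat_whiskerLeft, Iso.inv_hom_id_assoc]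
    simp only [rhoPow, Iso.trans_hom, Iso.symm_hom, Iso.app_inv, Functor.mapIso_hom,
      whiskerRightIso_hom, Iso.app_hom, assoc, ← Functor.map_comp, Functor.id_obj,
      Functor.comp_obj]
    rw [← whisker_exchange, ← reassoc_of% hinv]
    simp only [Functor.map_comp]
    rw [← Functor.comp_map, ← NatTrans.naturality_assoc, Functor.id_map]

end SuspendedMonoidal

open SuspendedMonoidal in
/-- In a suspended monoidal category, for `f : e ⟶ T^p e` and `g : e ⟶ T^q e`, the star
product `f ⋆ g = T^{p+q}(l) ∘ T^p(λ_q) ∘ ρ_p ∘ (f ⊗ g) ∘ r⁻¹` equals `g ⋅ f = T^p(g) ∘ f`. -/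
theorem star_eq_dot_swap (S : SuspendedMonoidal C) (p q : ℤ)
    (f : 𝟙_ C ⟶ (𝟙_ C)⟦p⟧) (g : 𝟙_ C ⟶ (𝟙_ C)⟦q⟧) :
    (ρ_ (𝟙_ C)).inv ≫ (f ⊗ₘ g) ≫ (S.rhoPow p (𝟙_ C) ((𝟙_ C)⟦q⟧)).hom ≫
        (S.lamPow q (𝟙_ C) (𝟙_ C)).hom⟦p⟧' ≫ ((λ_ (𝟙_ C)).hom⟦q⟧')⟦p⟧' =
      f ≫ g⟦p⟧' := by
  have hg : 𝟙_ C ◁ g ≫ (S.lamPow q (𝟙_ C) (𝟙_ C)).hom ≫ (λ_ (𝟙_ C)).hom⟦q⟧' =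
      (λ_ _).hom ≫ g := by
    rw [S.lamPow_leftUnitor, leftUnitor_naturality]
  calc _ = (ρ_ (𝟙_ C)).inv ≫ f ▷ 𝟙_ C ≫ (S.rhoPow p (𝟙_ C) (𝟙_ C)).hom ≫
        (𝟙_ C ◁ g ≫ (S.lamPow q (𝟙_ C) (𝟙_ C)).hom ≫ (λ_ (𝟙_ C)).hom⟦q⟧')⟦p⟧' := by
        rw [MonoidalCategory.tensorHom_def, assoc, reassoc_of% S.rhoPow_whiskerLeft]
        simp only [Functor.map_comp]
    _ = (ρ_ (𝟙_ C)).inv ≫ f ▷ 𝟙_ C ≫ (ρ_ _).hom ≫ g⟦p⟧' := by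
        rw [hg, Functor.map_comp, unitors_equal, reassoc_of% S.rhoPow_rightUnitor]
    _ = f ≫ g⟦p⟧' := by
        rw [rightUnitor_naturality_assoc, Iso.inv_hom_id_assoc]
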